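/- Fix M > 0, ℓ > 12M², and E > 0 with E² < 1 and E^min(ℓ) < E² < E^max(ℓ). Then the equation E_ℓ^Sch(r) = E² has exactly three solutions r₀ < r₁ < r₂ in (2M, ∞); they satisfy 2M < r₀ < r_max^Sch(ℓ) < r₁ < r_min^Sch(ℓ) < r₂, and each is a simple root, i.e. (E_ℓ^Sch)'(rᵢ) ≠ 0 for i = 0, 1, 2. -/

import Mathlib

/-- The Schwarzschild effective potential `E_ℓ^Sch(r) = (1 - 2M/r)(1 + ℓ/r²)`. -/
noncomputable def Esch (M ℓ r : ℝ) : ℝ := (1 - 2*M/r) * (1 + ℓ/r^2)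

/-- `r_max^Sch(ℓ)`, the location of the maximum of the effective potential. -/
noncomputable def rmaxSch (M ℓ : ℝ) : ℝ := ℓ/(2*M) * (1 - Real.sqrt (1 - 12*M^2/ℓ))

/-- `r_min^Sch(ℓ)`, the location of the minimum of the effective potential. -/
noncomputable def rminSch (M ℓ : ℝ) : ℝ := ℓ/(2*M) * (1 + Real.sqrt (1 - 12*M^2/ℓ))

/-!
Since `(E_ℓ^Sch)'(r) = 2M (r - r_max)(r - r_min) / r⁴`, the potential increases strictly on
`[2M, r_max]`, decreases on `[r_max, r_min]` and increases on `[r_min, ∞)`. Its values `0` at `2M`,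
`E^max`, `E^min` and its limit `1` at infinity bracket `E²` on each of these pieces, so the
intermediate value theorem gives one root per piece and strict monotonicity makes it the only one.
The roots are not critical points, hence simple.
-/

open Filter Set Topology

section Schwarzschild

variable {M ℓ r : ℝ}

lemma rmaxSch_lt_rminSch (hM : 0 < M) (hℓ : 12*M^2 < ℓ) : rmaxSch M ℓ < rminSch M ℓ := by
  have hℓ0 : 0 < ℓ := lt_trans (by positivity) hℓ
  have hs : 0 < Real.sqrt (1 - 12*M^2/ℓ) :=
    Real.sqrt_pos.2 (sub_pos.2 ((div_lt_one hℓ0).2 hℓ))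
  unfold rmaxSch rminSch
  gcongr
  linarith

lemma mul_rmaxSch_add_rminSch (hM : M ≠ 0) : M * (rmaxSch M ℓ + rminSch M ℓ) = ℓ := by
  unfold rmaxSch rminSch
  field_simp
  ring

lemma rmaxSch_mul_rminSch (hM : 0 < M) (hℓ : 12*M^2 ≤ ℓ) : rmaxSch M ℓ * rminSch M ℓ = 3*ℓ := by
  have hℓ0 : 0 < ℓ := lt_of_lt_of_le (by positivity) hℓ
  have hs : Real.sqrt (1 - 12*M^2/ℓ) ^ 2 = 1 - 12*M^2/ℓ :=
    Real.sq_sqrt (sub_nonneg.2 ((div_le_one hℓ0).2 hℓ))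
  unfold rmaxSch rminSch
  rw [show ∀ s : ℝ, ℓ/(2*M) * (1 - s) * (ℓ/(2*M) * (1 + s)) = (ℓ/(2*M))^2 * (1 - s^2) by
    intro s; ring, hs]
  field_simp
  ring

/-- By Vieta, `(r_max - 3M)(r_min - 3M) = 9M²`, while `r_min ≥ ℓ/(2M) > 3M`. -/
lemma two_mul_lt_rmaxSch (hM : 0 < M) (hℓ : 12*M^2 < ℓ) : 2*M < rmaxSch M ℓ := by
  have hℓ0 : 0 < ℓ := lt_trans (by positivity) hℓ
  have hvieta : (rmaxSch M ℓ - 3*M) * (rminSch M ℓ - 3*M) = 9*M^2 := by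
    linear_combination rmaxSch_mul_rminSch hM hℓ.le - 3 * mul_rmaxSch_add_rminSch (ℓ := ℓ) hM.ne'
  have hb : 3*M < rminSch M ℓ := calc
    3*M < ℓ/(2*M) := by rw [lt_div_iff₀ (by positivity)]; nlinarith
    _ ≤ rminSch M ℓ :=
      le_mul_of_one_le_right (by positivity) (le_add_of_nonneg_right (Real.sqrt_nonneg _))
  have ha : 3*M < rmaxSch M ℓ :=
    sub_pos.1 (pos_of_mul_pos_left (hvieta ▸ by positivity) (sub_pos.2 hb).le)
  linarith

lemma hasDerivAt_Esch (hM : 0 < M) (hℓ : 12*M^2 ≤ ℓ) (hr : r ≠ 0) :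
    HasDerivAt (Esch M ℓ) (2*M*(r - rmaxSch M ℓ)*(r - rminSch M ℓ)/r^4) r := by
  have h1 : HasDerivAt (fun r : ℝ => 1 - 2*M/r) (2*M/r^2) r := by
    simp only [div_eq_mul_inv]
    exact (((hasDerivAt_inv hr).const_mul (2*M)).const_sub 1).congr_deriv (by ring)
  have h2 : HasDerivAt (fun r : ℝ => 1 + ℓ/r^2) (-2*ℓ/r^3) r := by
    simp only [div_eq_mul_inv]
    refine (((hasDerivAt_pow 2 r).inv (pow_ne_zero 2 hr)).const_mul ℓ).const_add 1 |>.congr_deriv ?_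
    field_simp
    ring
  refine (h1.mul h2).congr_deriv ?_
  field_simp
  linear_combination r * mul_rmaxSch_add_rminSch (ℓ := ℓ) hM.ne' - M * rmaxSch_mul_rminSch hM hℓ

lemma deriv_Esch (hM : 0 < M) (hℓ : 12*M^2 ≤ ℓ) (hr : r ≠ 0) :
    deriv (Esch M ℓ) r = 2*M*(r - rmaxSch M ℓ)*(r - rminSch M ℓ)/r^4 :=
  (hasDerivAt_Esch hM hℓ hr).deriv

lemma deriv_Esch_ne_zero (hM : 0 < M) (hℓ : 12*M^2 ≤ ℓ) (hr : r ≠ 0) (ha : r ≠ rmaxSch M ℓ)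
    (hb : r ≠ rminSch M ℓ) : deriv (Esch M ℓ) r ≠ 0 := by
  rw [deriv_Esch hM hℓ hr]
  have := sub_ne_zero.2 ha
  have := sub_ne_zero.2 hb
  positivity

lemma continuousOn_Esch : ContinuousOn (Esch M ℓ) (Ioi 0) := by
  intro r (hr : 0 < r)
  unfold Esch
  fun_prop (disch := positivity)

lemma Esch_two_mul (hM : M ≠ 0) : Esch M ℓ (2*M) = 0 := by
  simp [Esch, hM]

lemma tendsto_Esch_atTop : Tendsto (Esch M ℓ) atTop (𝓝 1) := by
  have h1 : Tendsto (fun r : ℝ => 2*M/r) atTop (𝓝 0) := tendsto_const_nhds.div_atTop tendsto_id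
  have h2 : Tendsto (fun r : ℝ => ℓ/r^2) atTop (𝓝 0) :=
    tendsto_const_nhds.div_atTop (tendsto_pow_atTop two_ne_zero)
  have h := ((tendsto_const_nhds (x := (1:ℝ))).sub h1).mul ((tendsto_const_nhds (x := (1:ℝ))).add h2)
  rw [sub_zero, add_zero, mul_one] at h
  exact h

lemma strictMonoOn_Esch {D : Set ℝ} (hM : 0 < M) (hℓ : 12*M^2 ≤ ℓ) (hD : Convex ℝ D)
    (hD0 : D ⊆ Ioi 0) (hpos : ∀ r ∈ interior D, 0 < (r - rmaxSch M ℓ) * (r - rminSch M ℓ)) :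
    StrictMonoOn (Esch M ℓ) D := by
  refine strictMonoOn_of_deriv_pos hD (continuousOn_Esch.mono hD0) fun r hr => ?_
  have hr0 : 0 < r := hD0 (interior_subset hr)
  rw [deriv_Esch hM hℓ hr0.ne', mul_assoc]
  have := hpos r hr
  positivity

lemma strictAntiOn_Esch {D : Set ℝ} (hM : 0 < M) (hℓ : 12*M^2 ≤ ℓ) (hD : Convex ℝ D)
    (hD0 : D ⊆ Ioi 0) (hneg : ∀ r ∈ interior D, (r - rmaxSch M ℓ) * (r - rminSch M ℓ) < 0) :
    StrictAntiOn (Esch M ℓ) D := by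
  refine strictAntiOn_of_deriv_neg hD (continuousOn_Esch.mono hD0) fun r hr => ?_
  have hr0 : 0 < r := hD0 (interior_subset hr)
  rw [deriv_Esch hM hℓ hr0.ne', mul_assoc]
  exact div_neg_of_neg_of_pos (mul_neg_of_pos_of_neg (by positivity) (hneg r hr)) (by positivity)

lemma strictMonoOn_Esch_Icc_two_mul_rmaxSch (hM : 0 < M) (hℓ : 12*M^2 < ℓ) :
    StrictMonoOn (Esch M ℓ) (Icc (2*M) (rmaxSch M ℓ)) := by
  have hab := rmaxSch_lt_rminSch hM hℓ
  refine strictMonoOn_Esch hM hℓ.le (convex_Icc _ _)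
    (fun r hr => (show (0:ℝ) < 2*M by positivity).trans_le hr.1) fun r hr => ?_
  rw [interior_Icc] at hr
  exact mul_pos_of_neg_of_neg (by linarith [hr.2]) (by linarith [hr.2])

lemma strictAntiOn_Esch_Icc_rmaxSch_rminSch (hM : 0 < M) (hℓ : 12*M^2 < ℓ) :
    StrictAntiOn (Esch M ℓ) (Icc (rmaxSch M ℓ) (rminSch M ℓ)) := by
  have h2Ma := two_mul_lt_rmaxSch hM hℓ
  refine strictAntiOn_Esch hM hℓ.le (convex_Icc _ _)
    (fun r hr => (show (0:ℝ) < rmaxSch M ℓ by linarith).trans_le hr.1) fun r hr => ?_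
  rw [interior_Icc] at hr
  exact mul_neg_of_pos_of_neg (by linarith [hr.1]) (by linarith [hr.2])

lemma strictMonoOn_Esch_Ici_rminSch (hM : 0 < M) (hℓ : 12*M^2 < ℓ) :
    StrictMonoOn (Esch M ℓ) (Ici (rminSch M ℓ)) := by
  have h2Ma := two_mul_lt_rmaxSch hM hℓ
  have hab := rmaxSch_lt_rminSch hM hℓ
  refine strictMonoOn_Esch hM hℓ.le (convex_Ici _)
    (fun r (hr : _ ≤ r) => (show (0:ℝ) < rminSch M ℓ by linarith).trans_le hr) fun r hr => ?_
  rw [interior_Ici] at hr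
  exact mul_pos (by linarith [mem_Ioi.1 hr]) (by linarith [mem_Ioi.1 hr])

end Schwarzschild

/-- With `E^min(ℓ) = Esch M ℓ (rminSch M ℓ)` and `E^max(ℓ) = Esch M ℓ (rmaxSch M ℓ)`:
for `E² < 1` strictly between the critical values, there are exactly three simple roots. -/
theorem stmt8 (M ℓ E : ℝ) (hM : 0 < M) (hℓ : 12*M^2 < ℓ) (hE : 0 < E) (hE1 : E^2 < 1)
    (hmin : Esch M ℓ (rminSch M ℓ) < E^2) (hmax : E^2 < Esch M ℓ (rmaxSch M ℓ)) :
    ∃ r0 r1 r2 : ℝ,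
      2*M < r0 ∧ r0 < rmaxSch M ℓ ∧ rmaxSch M ℓ < r1 ∧ r1 < rminSch M ℓ ∧ rminSch M ℓ < r2 ∧
      Esch M ℓ r0 = E^2 ∧ Esch M ℓ r1 = E^2 ∧ Esch M ℓ r2 = E^2 ∧
      deriv (Esch M ℓ) r0 ≠ 0 ∧ deriv (Esch M ℓ) r1 ≠ 0 ∧ deriv (Esch M ℓ) r2 ≠ 0 ∧
      ∀ r ∈ Set.Ioi (2*M), Esch M ℓ r = E^2 → r = r0 ∨ r = r1 ∨ r = r2 := by
  have h2Ma := two_mul_lt_rmaxSch hM hℓ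
  have hab := rmaxSch_lt_rminSch hM hℓ
  set a := rmaxSch M ℓ
  set b := rminSch M ℓ
  have hcont {c d : ℝ} (hc : 0 < c) : ContinuousOn (Esch M ℓ) (Icc c d) :=
    continuousOn_Esch.mono fun r hr => hc.trans_le hr.1
  obtain ⟨r0, ⟨h2Mr0, hr0a⟩, hr0⟩ := intermediate_value_Ioo h2Ma.le (hcont (by positivity))
    ⟨by rw [Esch_two_mul hM.ne']; positivity, hmax⟩
  obtain ⟨r1, ⟨har1, hr1b⟩, hr1⟩ :=
    intermediate_value_Ioo' hab.le (hcont (by linarith)) ⟨hmin, hmax⟩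
  obtain ⟨R, hbR, hER⟩ :=
    ((eventually_gt_atTop b).and (tendsto_Esch_atTop.eventually (lt_mem_nhds hE1))).exists
  obtain ⟨r2, ⟨hbr2, -⟩, hr2⟩ := intermediate_value_Ioo hbR.le (hcont (by linarith)) ⟨hmin, hER⟩
  refine ⟨r0, r1, r2, h2Mr0, hr0a, har1, hr1b, hbr2, hr0, hr1, hr2,
    deriv_Esch_ne_zero hM hℓ.le (by linarith) hr0a.ne (by linarith),
    deriv_Esch_ne_zero hM hℓ.le (by linarith) har1.ne' hr1b.ne,
    deriv_Esch_ne_zero hM hℓ.le (by linarith) (by linarith) hbr2.ne', fun r hr hrE => ?_⟩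
  rcases lt_trichotomy r a with hra | rfl | har
  · exact .inl ((strictMonoOn_Esch_Icc_two_mul_rmaxSch hM hℓ).injOn ⟨le_of_lt hr, hra.le⟩
      ⟨h2Mr0.le, hr0a.le⟩ (hrE.trans hr0.symm))
  · exact absurd hrE hmax.ne'
  rcases lt_trichotomy r b with hrb | rfl | hbr
  · exact .inr (.inl ((strictAntiOn_Esch_Icc_rmaxSch_rminSch hM hℓ).injOn ⟨har.le, hrb.le⟩
      ⟨har1.le, hr1b.le⟩ (hrE.trans hr1.symm)))
  · exact absurd hrE hmin.ne
  · exact .inr (.inr ((strictMonoOn_Esch_Ici_rminSch hM hℓ).injOn hbr.le hbr2.le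
      (hrE.trans hr2.symm)))
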